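/- arXiv:2501.14612 — 10 statements merged into one kernel-verified Lean document; each statement's English description precedes it below -/
import Mathlib

section
/- For any 2×2 game with real payoff matrices A = (a_{ij}) and B = (b_{ij}): if (σ,τ) is a Nash equilibrium, then the induced joint distribution p with p_{jk} = σ_j·τ_k is a dependency equilibrium. -/
open Filter Topology

/-- `p = (p11, p12, p21, p22)` is a dependency equilibrium of the `2 × 2` game with
payoff matrices `A = (aᵢⱼ)` and `B = (bᵢⱼ)`: there is a sequence of totally mixed joint
distributions converging to `p` along which all four conditional expected payoffs
converge, and the limits satisfy the appropriate inequalities. -/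
def IsDependencyEquilibrium (a11 a12 a21 a22 b11 b12 b21 b22 p11 p12 p21 p22 : ℝ) : Prop :=
  ∃ q11 q12 q21 q22 : ℕ → ℝ, ∃ L1 L2 M1 M2 : ℝ,
    (∀ r, 0 < q11 r ∧ 0 < q12 r ∧ 0 < q21 r ∧ 0 < q22 r ∧
      q11 r + q12 r + q21 r + q22 r = 1) ∧
    Tendsto q11 atTop (𝓝 p11) ∧ Tendsto q12 atTop (𝓝 p12) ∧
    Tendsto q21 atTop (𝓝 p21) ∧ Tendsto q22 atTop (𝓝 p22) ∧
    Tendsto (fun r => (a11 * q11 r + a12 * q12 r) / (q11 r + q12 r)) atTop (𝓝 L1) ∧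
    Tendsto (fun r => (a21 * q21 r + a22 * q22 r) / (q21 r + q22 r)) atTop (𝓝 L2) ∧
    Tendsto (fun r => (b11 * q11 r + b21 * q21 r) / (q11 r + q21 r)) atTop (𝓝 M1) ∧
    Tendsto (fun r => (b12 * q12 r + b22 * q22 r) / (q12 r + q22 r)) atTop (𝓝 M2) ∧
    (p11 + p12 ≠ 0 → L2 ≤ L1) ∧ (p21 + p22 ≠ 0 → L1 ≤ L2) ∧
    (p11 + p21 ≠ 0 → M2 ≤ M1) ∧ (p12 + p22 ≠ 0 → M1 ≤ M2)

/-- For any `2 × 2` game, if `(σ, τ)` is a Nash equilibrium, then the induced joint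
distribution `p` with `p_{jk} = σ_j · τ_k` is a dependency equilibrium. -/
theorem nash_is_dependency_equilibrium
    (a11 a12 a21 a22 b11 b12 b21 b22 : ℝ) (σ1 σ2 τ1 τ2 : ℝ)
    (hσ1 : 0 ≤ σ1) (hσ2 : 0 ≤ σ2) (hσ : σ1 + σ2 = 1)
    (hτ1 : 0 ≤ τ1) (hτ2 : 0 ≤ τ2) (hτ : τ1 + τ2 = 1)
    (hNash1 : ∀ σ1' σ2' : ℝ, 0 ≤ σ1' → 0 ≤ σ2' → σ1' + σ2' = 1 →
      a11 * σ1' * τ1 + a12 * σ1' * τ2 + a21 * σ2' * τ1 + a22 * σ2' * τ2 ≤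
      a11 * σ1 * τ1 + a12 * σ1 * τ2 + a21 * σ2 * τ1 + a22 * σ2 * τ2)
    (hNash2 : ∀ τ1' τ2' : ℝ, 0 ≤ τ1' → 0 ≤ τ2' → τ1' + τ2' = 1 →
      b11 * σ1 * τ1' + b12 * σ1 * τ2' + b21 * σ2 * τ1' + b22 * σ2 * τ2' ≤
      b11 * σ1 * τ1 + b12 * σ1 * τ2 + b21 * σ2 * τ1 + b22 * σ2 * τ2) :
    IsDependencyEquilibrium a11 a12 a21 a22 b11 b12 b21 b22
      (σ1 * τ1) (σ1 * τ2) (σ2 * τ1) (σ2 * τ2) := by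
  set e : ℕ → ℝ := fun r => 1 / (r + 1) with he
  have he_pos : ∀ r, 0 < e r := fun r => by positivity
  have he_le : ∀ r, e r ≤ 1 := by
    intro r
    rw [he]
    rw [div_le_one (by positivity)]
    have : (0:ℝ) ≤ (r:ℝ) := Nat.cast_nonneg r
    linarith
  have he0 : Tendsto e atTop (𝓝 0) := tendsto_one_div_add_atTop_nhds_zero_nat
  set s1 : ℕ → ℝ := fun r => (1 - e r) * σ1 + e r / 2 with hs1
  set s2 : ℕ → ℝ := fun r => (1 - e r) * σ2 + e r / 2 with hs2
  set t1 : ℕ → ℝ := fun r => (1 - e r) * τ1 + e r / 2 with ht1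
  set t2 : ℕ → ℝ := fun r => (1 - e r) * τ2 + e r / 2 with ht2
  have hs1pos : ∀ r, 0 < s1 r := fun r => by
    have := he_pos r; have := he_le r
    have : 0 ≤ (1 - e r) * σ1 := mul_nonneg (by linarith) hσ1
    simp only [hs1]; linarith [he_pos r]
  have hs2pos : ∀ r, 0 < s2 r := fun r => by
    have := he_pos r; have := he_le r
    have : 0 ≤ (1 - e r) * σ2 := mul_nonneg (by linarith) hσ2
    simp only [hs2]; linarith [he_pos r]
  have ht1pos : ∀ r, 0 < t1 r := fun r => by
    have := he_pos r; have := he_le r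
    have : 0 ≤ (1 - e r) * τ1 := mul_nonneg (by linarith) hτ1
    simp only [ht1]; linarith [he_pos r]
  have ht2pos : ∀ r, 0 < t2 r := fun r => by
    have := he_pos r; have := he_le r
    have : 0 ≤ (1 - e r) * τ2 := mul_nonneg (by linarith) hτ2
    simp only [ht2]; linarith [he_pos r]
  have hssum : ∀ r, s1 r + s2 r = 1 := fun r => by
    simp only [hs1, hs2]; nlinarith [he_pos r]
  have htsum : ∀ r, t1 r + t2 r = 1 := fun r => by
    simp only [ht1, ht2]; nlinarith [he_pos r]
  have hs1lim : Tendsto s1 atTop (𝓝 σ1) := by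
    have : Tendsto s1 atTop (𝓝 ((1 - 0) * σ1 + 0 / 2)) :=
      (((tendsto_const_nhds.sub he0).mul tendsto_const_nhds).add (he0.div_const 2))
    simpa using this
  have hs2lim : Tendsto s2 atTop (𝓝 σ2) := by
    have : Tendsto s2 atTop (𝓝 ((1 - 0) * σ2 + 0 / 2)) :=
      (((tendsto_const_nhds.sub he0).mul tendsto_const_nhds).add (he0.div_const 2))
    simpa using this
  have ht1lim : Tendsto t1 atTop (𝓝 τ1) := by
    have : Tendsto t1 atTop (𝓝 ((1 - 0) * τ1 + 0 / 2)) :=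
      (((tendsto_const_nhds.sub he0).mul tendsto_const_nhds).add (he0.div_const 2))
    simpa using this
  have ht2lim : Tendsto t2 atTop (𝓝 τ2) := by
    have : Tendsto t2 atTop (𝓝 ((1 - 0) * τ2 + 0 / 2)) :=
      (((tendsto_const_nhds.sub he0).mul tendsto_const_nhds).add (he0.div_const 2))
    simpa using this
  refine ⟨fun r => s1 r * t1 r, fun r => s1 r * t2 r, fun r => s2 r * t1 r,
    fun r => s2 r * t2 r,
    a11 * τ1 + a12 * τ2, a21 * τ1 + a22 * τ2,
    b11 * σ1 + b21 * σ2, b12 * σ1 + b22 * σ2, ?_, ?_, ?_, ?_, ?_, ?_, ?_, ?_, ?_, ?_, ?_, ?_, ?_⟩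
  · intro r
    refine ⟨mul_pos (hs1pos r) (ht1pos r), mul_pos (hs1pos r) (ht2pos r),
      mul_pos (hs2pos r) (ht1pos r), mul_pos (hs2pos r) (ht2pos r), ?_⟩
    have h1 := hssum r; have h2 := htsum r
    linear_combination (s1 r + s2 r) * h2 + h1
  · exact hs1lim.mul ht1lim
  · exact hs1lim.mul ht2lim
  · exact hs2lim.mul ht1lim
  · exact hs2lim.mul ht2lim
  · have heq : (fun r => (a11 * (s1 r * t1 r) + a12 * (s1 r * t2 r)) / (s1 r * t1 r + s1 r * t2 r))
        = fun r => a11 * t1 r + a12 * t2 r := by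
      funext r
      have h2 := htsum r
      have hp1 := mul_pos (hs1pos r) (ht1pos r)
      have hp2 := mul_pos (hs1pos r) (ht2pos r)
      rw [div_eq_iff (by linarith)]
      linear_combination (-(s1 r) * (a11 * t1 r + a12 * t2 r)) * h2
    rw [heq]
    exact (tendsto_const_nhds.mul ht1lim).add (tendsto_const_nhds.mul ht2lim)
  · have heq : (fun r => (a21 * (s2 r * t1 r) + a22 * (s2 r * t2 r)) / (s2 r * t1 r + s2 r * t2 r))
        = fun r => a21 * t1 r + a22 * t2 r := by
      funext r
      have h2 := htsum r
      have hp1 := mul_pos (hs2pos r) (ht1pos r)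
      have hp2 := mul_pos (hs2pos r) (ht2pos r)
      rw [div_eq_iff (by linarith)]
      linear_combination (-(s2 r) * (a21 * t1 r + a22 * t2 r)) * h2
    rw [heq]
    exact (tendsto_const_nhds.mul ht1lim).add (tendsto_const_nhds.mul ht2lim)
  · have heq : (fun r => (b11 * (s1 r * t1 r) + b21 * (s2 r * t1 r)) / (s1 r * t1 r + s2 r * t1 r))
        = fun r => b11 * s1 r + b21 * s2 r := by
      funext r
      have h2 := hssum r
      have hp1 := mul_pos (hs1pos r) (ht1pos r)
      have hp2 := mul_pos (hs2pos r) (ht1pos r)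
      rw [div_eq_iff (by linarith)]
      linear_combination (-(t1 r) * (b11 * s1 r + b21 * s2 r)) * h2
    rw [heq]
    exact (tendsto_const_nhds.mul hs1lim).add (tendsto_const_nhds.mul hs2lim)
  · have heq : (fun r => (b12 * (s1 r * t2 r) + b22 * (s2 r * t2 r)) / (s1 r * t2 r + s2 r * t2 r))
        = fun r => b12 * s1 r + b22 * s2 r := by
      funext r
      have h2 := hssum r
      have hp1 := mul_pos (hs1pos r) (ht2pos r)
      have hp2 := mul_pos (hs2pos r) (ht2pos r)
      rw [div_eq_iff (by linarith)]
      linear_combination (-(t2 r) * (b12 * s1 r + b22 * s2 r)) * h2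
    rw [heq]
    exact (tendsto_const_nhds.mul hs1lim).add (tendsto_const_nhds.mul hs2lim)
  · intro hne
    have hσ1pos : 0 < σ1 := by
      rcases lt_or_eq_of_le hσ1 with h | h
      · exact h
      · exfalso; apply hne; rw [← h]; ring
    have h2 := hNash1 0 1 le_rfl zero_le_one (by ring)
    have hmul : σ1 * (a21 * τ1 + a22 * τ2) ≤ σ1 * (a11 * τ1 + a12 * τ2) := by
      have hx : σ2 = 1 - σ1 := by linarith
      rw [hx] at h2; nlinarith [h2]
    exact le_of_mul_le_mul_left hmul hσ1pos
  · intro hne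
    have hσ2pos : 0 < σ2 := by
      rcases lt_or_eq_of_le hσ2 with h | h
      · exact h
      · exfalso; apply hne; rw [← h]; ring
    have h1 := hNash1 1 0 zero_le_one le_rfl (by ring)
    have hmul : σ2 * (a11 * τ1 + a12 * τ2) ≤ σ2 * (a21 * τ1 + a22 * τ2) := by
      have hx : σ1 = 1 - σ2 := by linarith
      rw [hx] at h1; nlinarith [h1]
    exact le_of_mul_le_mul_left hmul hσ2pos
  · intro hne
    have hτ1pos : 0 < τ1 := by
      rcases lt_or_eq_of_le hτ1 with h | h
      · exact h
      · exfalso; apply hne; rw [← h]; ring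
    have h2 := hNash2 0 1 le_rfl zero_le_one (by ring)
    have hmul : τ1 * (b12 * σ1 + b22 * σ2) ≤ τ1 * (b11 * σ1 + b21 * σ2) := by
      have hx : τ2 = 1 - τ1 := by linarith
      rw [hx] at h2; nlinarith [h2]
    exact le_of_mul_le_mul_left hmul hτ1pos
  · intro hne
    have hτ2pos : 0 < τ2 := by
      rcases lt_or_eq_of_le hτ2 with h | h
      · exact h
      · exfalso; apply hne; rw [← h]; ring
    have h1 := hNash2 1 0 zero_le_one le_rfl (by ring)
    have hmul : τ2 * (b11 * σ1 + b21 * σ2) ≤ τ2 * (b12 * σ1 + b22 * σ2) := by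
      have hx : τ1 = 1 - τ2 := by linarith
      rw [hx] at h1; nlinarith [h1]
    exact le_of_mul_le_mul_left hmul hτ2pos
end

section
/- Let X be a Prisoner's-Dilemma-type 2×2 game: the payoff matrices satisfy b_{ij} = a_{ji} for all i,j (the game is symmetric), and a_{21} > a_{11} > a_{22} > a_{12}. Then the joint distribution p = (1,0,0,0), corresponding to both players cooperating, is a dependency equilibrium of X. -/
open Filter Topology

/-!
Perturb `(1, 0, 0, 0)` by putting weight `ε²` on the two off-diagonal cells and `ε` on mutual
defection. Each off-diagonal cell is then negligible against both diagonal cells in its row and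
column: conditioned on one player defecting, the other almost surely defects too. So the
conditional payoffs of cooperating tend to `a₁₁, b₁₁` and those of defecting to `a₂₂, b₂₂`, and
cooperating is optimal in the limit as soon as `a₂₂ ≤ a₁₁` and `b₂₂ ≤ b₁₁`.
-/

section WeightedAverage

variable {α : Type*} {l : Filter α} {x y t : α → ℝ}

theorem tendsto_weightedAverage_left (a b : ℝ) (hx : ∀ r, x r ≠ 0) (hy : ∀ r, y r = t r * x r)
    (ht : Tendsto t l (𝓝 0)) :
    Tendsto (fun r => (a * x r + b * y r) / (x r + y r)) l (𝓝 a) := by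
  have hrewrite : ∀ r, (a + b * t r) / (1 + t r) = (a * x r + b * y r) / (x r + y r) := by
    intro r
    rw [hy, ← mul_div_mul_right _ _ (hx r)]
    ring
  have hlim : Tendsto (fun r => (a + b * t r) / (1 + t r)) l _ :=
    ((tendsto_const_nhds (x := a)).add (ht.const_mul b)).div (tendsto_const_nhds.add ht)
      (by norm_num : (1 : ℝ) + 0 ≠ 0)
  simpa [hrewrite] using hlim

theorem tendsto_weightedAverage_right (a b : ℝ) (hy : ∀ r, y r ≠ 0) (hx : ∀ r, x r = t r * y r)
    (ht : Tendsto t l (𝓝 0)) :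
    Tendsto (fun r => (a * x r + b * y r) / (x r + y r)) l (𝓝 b) := by
  simpa only [add_comm] using tendsto_weightedAverage_left b a hy hx ht

end WeightedAverage

theorem isDependencyEquilibrium_cooperate {a11 a12 a21 a22 b11 b12 b21 b22 : ℝ}
    (ha : a22 ≤ a11) (hb : b22 ≤ b11) :
    IsDependencyEquilibrium a11 a12 a21 a22 b11 b12 b21 b22 1 0 0 0 := by
  set ε : ℕ → ℝ := fun r => 1 / ((r : ℝ) + 1)
  have hε_pos : ∀ r, 0 < ε r := fun r => by positivity
  have hε : Tendsto ε atTop (𝓝 0) := tendsto_one_div_add_atTop_nhds_zero_nat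
  have hε_sq : Tendsto (fun r => ε r ^ 2) atTop (𝓝 0) := by simpa using hε.pow 2
  set Z : ℕ → ℝ := fun r => 1 + 2 * ε r ^ 2 + ε r with hZ_def
  have hZ_pos : ∀ r, 0 < Z r := fun r => by have := hε_pos r; positivity
  have hZ : Tendsto Z atTop (𝓝 1) := by
    simpa using (tendsto_const_nhds.add (hε_sq.const_mul 2)).add hε
  have hq11 : Tendsto (fun r => 1 / Z r) atTop (𝓝 (1 / 1)) := tendsto_const_nhds.div hZ one_ne_zero
  have hq12 : Tendsto (fun r => ε r ^ 2 / Z r) atTop (𝓝 (0 / 1)) := hε_sq.div hZ one_ne_zero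
  have hq22 : Tendsto (fun r => ε r / Z r) atTop (𝓝 (0 / 1)) := hε.div hZ one_ne_zero
  rw [div_one] at hq11
  rw [zero_div] at hq12 hq22
  have hq11_pos : ∀ r, 0 < 1 / Z r := fun r => one_div_pos.2 (hZ_pos r)
  have hq22_pos : ∀ r, 0 < ε r / Z r := fun r => div_pos (hε_pos r) (hZ_pos r)
  have hq12_eq_mul_q11 : ∀ r, ε r ^ 2 / Z r = ε r ^ 2 * (1 / Z r) := fun r => (mul_one_div _ _).symm
  have hq12_eq_mul_q22 : ∀ r, ε r ^ 2 / Z r = ε r * (ε r / Z r) := fun r => by ring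
  have hq_dist : ∀ r, 0 < 1 / Z r ∧ 0 < ε r ^ 2 / Z r ∧ 0 < ε r ^ 2 / Z r ∧ 0 < ε r / Z r ∧
      1 / Z r + ε r ^ 2 / Z r + ε r ^ 2 / Z r + ε r / Z r = 1 := by
    intro r
    have := hε_pos r
    have := hZ_pos r
    refine ⟨hq11_pos r, by positivity, by positivity, hq22_pos r, ?_⟩
    field_simp
    rw [hZ_def]
    ring
  exact ⟨fun r => 1 / Z r, fun r => ε r ^ 2 / Z r, fun r => ε r ^ 2 / Z r, fun r => ε r / Z r,
    a11, a22, b11, b22, hq_dist, hq11, hq12, hq12, hq22,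
    tendsto_weightedAverage_left _ _ (fun r => (hq11_pos r).ne') hq12_eq_mul_q11 hε_sq,
    tendsto_weightedAverage_right _ _ (fun r => (hq22_pos r).ne') hq12_eq_mul_q22 hε,
    tendsto_weightedAverage_left _ _ (fun r => (hq11_pos r).ne') hq12_eq_mul_q11 hε_sq,
    tendsto_weightedAverage_right _ _ (fun r => (hq22_pos r).ne') hq12_eq_mul_q22 hε,
    fun _ => ha, fun h => (h (add_zero 0)).elim, fun _ => hb, fun h => (h (add_zero 0)).elim⟩

theorem cooperate_isDependencyEquilibrium_of_prisonersDilemma_general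
    (a11 a12 a21 a22 b11 b12 b21 b22 : ℝ)
    (hb11 : b11 = a11) (hb22 : b22 = a22)
    (h2 : a11 > a22) :
    IsDependencyEquilibrium a11 a12 a21 a22 b11 b12 b21 b22 1 0 0 0 :=
  isDependencyEquilibrium_cooperate h2.le (hb22.trans_le (h2.le.trans_eq hb11.symm))

/-- For a Prisoner's-Dilemma-type `2 × 2` game (symmetric: `bᵢⱼ = aⱼᵢ`, with
`a21 > a11 > a22 > a12`), the joint distribution `(1, 0, 0, 0)`, corresponding to
both players cooperating, is a dependency equilibrium. -/
theorem cooperate_isDependencyEquilibrium_of_prisonersDilemma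
    (a11 a12 a21 a22 b11 b12 b21 b22 : ℝ)
    (hb11 : b11 = a11) (hb12 : b12 = a21) (hb21 : b21 = a12) (hb22 : b22 = a22)
    (h1 : a21 > a11) (h2 : a11 > a22) (h3 : a22 > a12) :
    IsDependencyEquilibrium a11 a12 a21 a22 b11 b12 b21 b22 1 0 0 0 :=
  cooperate_isDependencyEquilibrium_of_prisonersDilemma_general a11 a12 a21 a22 b11 b12 b21 b22 hb11
    hb22 h2
end

section
/- Let X be a Prisoner's-Dilemma-type 2×2 game: the payoff matrices satisfy b_{ij} = a_{ji} for all i,j, and a_{21} > a_{11} > a_{22} > a_{12}. Then the set of totally mixed dependency equilibria p of X whose expected payoffs Pareto dominate the Nash payoffs (a_{22}, a_{22}) of the Nash equilibrium (0,0,0,1) — i.e. satisfying Σ_{j,k} a_{jk} p_{jk} > a_{22} and Σ_{j,k} b_{jk} p_{jk} > a_{22} — is infinite. -/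
set_option maxHeartbeats 1000000 in
/-- For a Prisoner's-Dilemma-type `2 × 2` game (symmetric: `bᵢⱼ = aⱼᵢ`, with
`a21 > a11 > a22 > a12`), the set of totally mixed dependency equilibria whose
expected payoffs Pareto dominate the Nash payoffs `(a22, a22)` of the unique Nash
equilibrium `(0,0,0,1)` is infinite. Here a point `p = (p11, p12, p21, p22)` of
`ℝ⁴` is a totally mixed dependency equilibrium if all entries are positive, they
sum to `1`, and the two equalities of conditional expected payoffs hold. -/
theorem infinite_pareto_dominating_dependency_equilibria
    (a11 a12 a21 a22 b11 b12 b21 b22 : ℝ)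
    (hb11 : b11 = a11) (hb12 : b12 = a21) (hb21 : b21 = a12) (hb22 : b22 = a22)
    (h1 : a21 > a11) (h2 : a11 > a22) (h3 : a22 > a12) :
    {p : ℝ × ℝ × ℝ × ℝ |
      0 < p.1 ∧ 0 < p.2.1 ∧ 0 < p.2.2.1 ∧ 0 < p.2.2.2 ∧
      p.1 + p.2.1 + p.2.2.1 + p.2.2.2 = 1 ∧
      (a11 * p.1 + a12 * p.2.1) / (p.1 + p.2.1)
        = (a21 * p.2.2.1 + a22 * p.2.2.2) / (p.2.2.1 + p.2.2.2) ∧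
      (b11 * p.1 + b21 * p.2.2.1) / (p.1 + p.2.2.1)
        = (b12 * p.2.1 + b22 * p.2.2.2) / (p.2.1 + p.2.2.2) ∧
      a11 * p.1 + a12 * p.2.1 + a21 * p.2.2.1 + a22 * p.2.2.2 > a22 ∧
      b11 * p.1 + b12 * p.2.1 + b21 * p.2.2.1 + b22 * p.2.2.2 > a22}.Infinite := by
  simp only [hb11, hb12, hb21, hb22]
  set ε : ℝ := min ((a11-a22)/(a22-a12)) ((a11-a22)/(1+|a12+a21-2*a22|)) with hε
  have hε0 : 0 < ε := lt_min (div_pos (by linarith) (by linarith))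
    (div_pos (by linarith) (by positivity))
  set z : ℝ → ℝ := fun t => t*((a21-a11)+t*(a21-a12))/((a11-a22)+t*(a12-a22)) with hzdef
  set s : ℝ → ℝ := fun t => 1 + 2*t + z t with hsdef
  set f : ℝ → ℝ×ℝ×ℝ×ℝ := fun t => (1/(s t), t/(s t), t/(s t), z t/(s t)) with hfdef
  have hDpos : ∀ t ∈ Set.Ioo (0:ℝ) ε, 0 < (a11-a22)+t*(a12-a22) := by
    rintro t ⟨ht0, htε⟩
    have h : t < (a11-a22)/(a22-a12) := lt_of_lt_of_le htε (min_le_left _ _)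
    have h' := (lt_div_iff₀ (by linarith : (0:ℝ) < a22 - a12)).mp h
    nlinarith
  have hzpos : ∀ t ∈ Set.Ioo (0:ℝ) ε, 0 < z t := by
    intro t ht
    exact div_pos (mul_pos ht.1 (by nlinarith [ht.1])) (hDpos t ht)
  have hspos : ∀ t ∈ Set.Ioo (0:ℝ) ε, 0 < s t := by
    intro t ht
    have := hzpos t ht
    have := ht.1
    simp only [hsdef]
    linarith
  have hZ : ∀ t ∈ Set.Ioo (0:ℝ) ε,
      z t * ((a11-a22)+t*(a12-a22)) = t*((a21-a11)+t*(a21-a12)) := by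
    intro t ht
    have hD := (hDpos t ht).ne'
    simp only [hzdef]
    field_simp
  have himg : f '' Set.Ioo 0 ε ⊆ {p : ℝ × ℝ × ℝ × ℝ |
      0 < p.1 ∧ 0 < p.2.1 ∧ 0 < p.2.2.1 ∧ 0 < p.2.2.2 ∧
      p.1 + p.2.1 + p.2.2.1 + p.2.2.2 = 1 ∧
      (a11 * p.1 + a12 * p.2.1) / (p.1 + p.2.1)
        = (a21 * p.2.2.1 + a22 * p.2.2.2) / (p.2.2.1 + p.2.2.2) ∧
      (a11 * p.1 + a12 * p.2.2.1) / (p.1 + p.2.2.1)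
        = (a21 * p.2.1 + a22 * p.2.2.2) / (p.2.1 + p.2.2.2) ∧
      a11 * p.1 + a12 * p.2.1 + a21 * p.2.2.1 + a22 * p.2.2.2 > a22 ∧
      a11 * p.1 + a21 * p.2.1 + a12 * p.2.2.1 + a22 * p.2.2.2 > a22} := by
    rintro _ ⟨t, ht, rfl⟩
    have ht0 := ht.1
    have hz := hzpos t ht
    have hs := hspos t ht
    have hsne := hs.ne'
    have hzD := hZ t ht
    have hseq : s t = 1 + 2*t + z t := by simp [hsdef]
    have hpay : 0 < a11 - a22 + (a12+a21-2*a22) * t := by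
      have h : t < (a11-a22)/(1+|a12+a21-2*a22|) := lt_of_lt_of_le ht.2 (min_le_right _ _)
      have h' := (lt_div_iff₀ (by positivity : (0:ℝ) < 1+|a12+a21-2*a22|)).mp h
      have h2 := abs_nonneg (a12+a21-2*a22)
      have h3 := neg_abs_le (a12+a21-2*a22)
      nlinarith
    simp only [Set.mem_setOf_eq, hfdef]
    refine ⟨by positivity, by positivity, by positivity, by positivity, ?_, ?_, ?_, ?_, ?_⟩
    · field_simp
      linarith [hseq]
    · rw [div_eq_div_iff (by positivity) (by positivity)]
      field_simp
      ring_nf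
      linear_combination hzD
    · rw [div_eq_div_iff (by positivity) (by positivity)]
      field_simp
      ring_nf
      linear_combination hzD
    · have e : a11 * (1/(s t)) + a12 * (t/(s t)) + a21 * (t/(s t)) + a22 * (z t/(s t))
          = (a11 + a12*t + a21*t + a22*(z t)) / (s t) := by
        field_simp
      rw [e, gt_iff_lt, lt_div_iff₀ hs, hseq]
      nlinarith [hpay]
    · have e : a11 * (1/(s t)) + a21 * (t/(s t)) + a12 * (t/(s t)) + a22 * (z t/(s t))
          = (a11 + a12*t + a21*t + a22*(z t)) / (s t) := by
        field_simp
        ring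
      rw [e, gt_iff_lt, lt_div_iff₀ hs, hseq]
      nlinarith [hpay]
  have hinj : Set.InjOn f (Set.Ioo 0 ε) := by
    intro t ht t' ht' hft
    have hs := (hspos t ht).ne'
    have hs' := (hspos t' ht').ne'
    have h1' : 1 / s t = 1 / s t' := congrArg Prod.fst hft
    have h2' : t / s t = t' / s t' := congrArg (fun p => p.2.1) hft
    have hss : s t = s t' := by
      field_simp at h1'
      exact h1'.symm
    rw [hss] at h2'
    have h2'' : t / s t' * s t' = t' / s t' * s t' := by rw [h2']
    rwa [div_mul_cancel₀ _ hs', div_mul_cancel₀ _ hs'] at h2''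
  exact Set.Infinite.mono himg ((Set.Ioo_infinite hε0).image hinj)
end

section
/- The Spohn cubic f of a 2×2 game with real payoff matrices A = (a_{ij}), B = (b_{ij}) is the zero polynomial if and only if at least one of the following holds: (i) a_{11}=a_{12}=a_{21}=a_{22}; (ii) b_{11}=b_{12}=b_{21}=b_{22}; (iii) a_{11}=a_{21}, a_{12}=a_{22}, b_{11}=b_{12} and b_{21}=b_{22}; (iv) a_{11}=a_{12}=a_{22} and b_{11}=b_{21}=b_{22}; (v) a_{11}=a_{12}=a_{21} and b_{11}=b_{12}=b_{21}. -/
open MvPolynomial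

/-- The Spohn cubic of the `2 × 2` game with payoff matrices `A = (aᵢⱼ)`, `B = (bᵢⱼ)`:
the ternary cubic `c1·x²y + c2·x²z + c3·xy² + c4·xz² + c5·y²z + c6·yz² + c7·xyz`
in `ℝ[x, y, z]` (with `x = X 0`, `y = X 1`, `z = X 2`). -/
noncomputable def spohnCubic (a11 a12 a21 a22 b11 b12 b21 b22 : ℝ) :
    MvPolynomial (Fin 3) ℝ :=
  C ((a11 - a22) * (b11 - b12)) * X 0 ^ 2 * X 1
    + C ((a11 - a21) * (b22 - b11)) * X 0 ^ 2 * X 2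
    + C ((a12 - a22) * (b11 - b12)) * X 0 * X 1 ^ 2
    + C ((a11 - a21) * (b22 - b21)) * X 0 * X 2 ^ 2
    + C ((a12 - a22) * (b21 - b12)) * X 1 ^ 2 * X 2
    + C ((a12 - a21) * (b22 - b21)) * X 1 * X 2 ^ 2
    + C ((a12 - a21) * (b22 - b11) + (a11 - a22) * (b21 - b12)) * X 0 * X 1 * X 2

private lemma spohn_aux_zero (c1 c2 c3 c4 c5 c6 c7 : ℝ)
    (h1 : c1 = 0) (h2 : c2 = 0) (h3 : c3 = 0) (h4 : c4 = 0) (h5 : c5 = 0)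
    (h6 : c6 = 0) (h7 : c7 = 0) :
    C c1 * X 0 ^ 2 * X 1 + C c2 * X 0 ^ 2 * X 2 + C c3 * X 0 * X 1 ^ 2
      + C c4 * X 0 * X 2 ^ 2 + C c5 * X 1 ^ 2 * X 2 + C c6 * X 1 * X 2 ^ 2
      + C c7 * X 0 * X 1 * X 2 = (0 : MvPolynomial (Fin 3) ℝ) := by
  subst h1 h2 h3 h4 h5 h6 h7; simp

private lemma spohn_resolve {x y u v : ℝ} (h : (x - y) * (u - v) = 0) (hxy : x ≠ y) :
    u = v := by
  rcases mul_eq_zero.mp h with h' | h'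
  · exact absurd (sub_eq_zero.mp h') hxy
  · exact sub_eq_zero.mp h'

private lemma spohn_resolve' {x y u v : ℝ} (h : (x - y) * (u - v) = 0) (huv : u ≠ v) :
    x = y := by
  rcases mul_eq_zero.mp h with h' | h'
  · exact sub_eq_zero.mp h'
  · exact absurd (sub_eq_zero.mp h') huv

/-- The Spohn cubic of a `2 × 2` game is the zero polynomial if and only if one of the
five listed degeneracy conditions on the payoff matrices holds. -/
theorem spohnCubic_eq_zero_iff (a11 a12 a21 a22 b11 b12 b21 b22 : ℝ) :
    spohnCubic a11 a12 a21 a22 b11 b12 b21 b22 = 0 ↔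
      ((a11 = a12 ∧ a12 = a21 ∧ a21 = a22) ∨
       (b11 = b12 ∧ b12 = b21 ∧ b21 = b22) ∨
       (a11 = a21 ∧ a12 = a22 ∧ b11 = b12 ∧ b21 = b22) ∨
       (a11 = a12 ∧ a12 = a22 ∧ b11 = b21 ∧ b21 = b22) ∨
       (a11 = a12 ∧ a12 = a21 ∧ b11 = b12 ∧ b12 = b21)) := by
  constructor
  · intro h
    have E : ∀ x y z : ℝ, (a11 - a22) * (b11 - b12) * (x ^ 2 * y)
        + (a11 - a21) * (b22 - b11) * (x ^ 2 * z)
        + (a12 - a22) * (b11 - b12) * (x * y ^ 2)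
        + (a11 - a21) * (b22 - b21) * (x * z ^ 2)
        + (a12 - a22) * (b21 - b12) * (y ^ 2 * z)
        + (a12 - a21) * (b22 - b21) * (y * z ^ 2)
        + ((a12 - a21) * (b22 - b11) + (a11 - a22) * (b21 - b12)) * (x * y * z) = 0 := by
      intro x y z
      have h' := congrArg (eval ![x, y, z]) h
      simp only [spohnCubic, map_add, map_mul, map_pow, eval_C, eval_X, map_zero,
        Matrix.cons_val_zero, Matrix.cons_val_one, Matrix.head_cons, Matrix.cons_val_two,
        Matrix.tail_cons] at h'
      linarith [h']
    have p1 := E 1 1 0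
    have p2 := E 1 (-1) 0
    have p3 := E 1 0 1
    have p4 := E 1 0 (-1)
    have p5 := E 0 1 1
    have p6 := E 0 1 (-1)
    have p7 := E 1 1 1
    norm_num at p1 p2 p3 p4 p5 p6 p7
    have hc1 : (a11 - a22) * (b11 - b12) = 0 := by linarith
    have hc2 : (a11 - a21) * (b22 - b11) = 0 := by linarith
    have hc3 : (a12 - a22) * (b11 - b12) = 0 := by linarith
    have hc4 : (a11 - a21) * (b22 - b21) = 0 := by linarith
    have hc5 : (a12 - a22) * (b21 - b12) = 0 := by linarith
    have hc6 : (a12 - a21) * (b22 - b21) = 0 := by linarith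
    have hc7 : (a12 - a21) * (b22 - b11) + (a11 - a22) * (b21 - b12) = 0 := by linarith
    rcases eq_or_ne a11 a21 with hac | hac
    · -- a11 = a21
      rcases eq_or_ne b11 b12 with hef | hef
      · -- b11 = b12
        rcases eq_or_ne b21 b22 with hgh | hgh
        · rcases eq_or_ne a12 a22 with hbd | hbd
          · exact Or.inr (Or.inr (Or.inl ⟨hac, hbd, hef, hgh⟩))
          · -- b21 = b12 from hc5, all b equal
            have hgf : b21 = b12 := spohn_resolve hc5 hbd
            exact Or.inr (Or.inl ⟨hef, by linarith, hgh⟩)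
        · -- b21 ≠ b22, hc6 gives a12 = a21
          have hbc : a12 = a21 := spohn_resolve' hc6 (fun hh => hgh (by linarith))
          rcases eq_or_ne a11 a22 with had | had
          · exact Or.inl ⟨by linarith, hbc, by linarith⟩
          · -- hc7 reduces to (a11 - a22)(b21 - b12) = 0
            have h7' : (a11 - a22) * (b21 - b12) = 0 := by linear_combination hc7 - (b22 - b11) * hbc
            have hgf : b21 = b12 := spohn_resolve h7' had
            exact Or.inr (Or.inr (Or.inr (Or.inr ⟨by linarith, hbc, hef, hgf.symm⟩)))
      · -- b11 ≠ b12 : hc1, hc3 give a11 = a22, a12 = a22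
        have had : a11 = a22 := spohn_resolve' hc1 hef
        have hbd : a12 = a22 := spohn_resolve' hc3 hef
        exact Or.inl ⟨by linarith, by linarith, by linarith⟩
    · -- a11 ≠ a21 : hc2, hc4 give b22 = b11, b22 = b21
      have hbe : b22 = b11 := spohn_resolve hc2 hac
      have hbg : b22 = b21 := spohn_resolve hc4 hac
      rcases eq_or_ne b11 b12 with hef | hef
      · -- all b equal
        exact Or.inr (Or.inl ⟨hef, by linarith, by linarith⟩)
      · -- hc1, hc3 give a11 = a22, a12 = a22
        have had : a11 = a22 := spohn_resolve' hc1 hef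
        have hbd : a12 = a22 := spohn_resolve' hc3 hef
        exact Or.inr (Or.inr (Or.inr (Or.inl ⟨by linarith, hbd, by linarith, hbg.symm⟩)))
  · intro h
    rcases h with ⟨h1, h2, h3⟩ | ⟨h1, h2, h3⟩ | ⟨h1, h2, h3, h4⟩ | ⟨h1, h2, h3, h4⟩ |
      ⟨h1, h2, h3, h4⟩ <;>
      [subst h1 h2 h3; subst h1 h2 h3; subst h1 h2 h3 h4; subst h1 h2 h3 h4;
        subst h1 h2 h3 h4] <;>
      · rw [spohnCubic]
        exact spohn_aux_zero _ _ _ _ _ _ _ (by ring) (by ring) (by ring) (by ring)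
          (by ring) (by ring) (by ring)
end

section
/- Let f be the Spohn cubic of a 2×2 game with real payoff matrices A = (a_{ij}), B = (b_{ij}). If a_{21} = a_{22}, then f factors in ℝ[x,y,z] as f = ((a_{11}−a_{22})·x + (a_{12}−a_{22})·y) · ((b_{11}−b_{12})·xy + (b_{22}−b_{11})·xz + (b_{21}−b_{12})·yz + (b_{22}−b_{21})·z²). -/
open MvPolynomial

/-- If `a21 = a22`, then the Spohn cubic factors as the product of a linear form
and a conic. -/
theorem spohnCubic_factorization_of_case3 (a11 a12 a21 a22 b11 b12 b21 b22 : ℝ)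
    (h : a21 = a22) :
    spohnCubic a11 a12 a21 a22 b11 b12 b21 b22 =
      (C (a11 - a22) * X 0 + C (a12 - a22) * X 1) *
        (C (b11 - b12) * X 0 * X 1 + C (b22 - b11) * X 0 * X 2
          + C (b21 - b12) * X 1 * X 2 + C (b22 - b21) * X 2 ^ 2) := by
  subst h; unfold spohnCubic; simp only [map_sub, map_add, map_mul]; ring
end

section
/- Let f be the Spohn cubic of a 2×2 game with real payoff matrices A = (a_{ij}), B = (b_{ij}). If b_{11} = b_{21}, then the linear form x + z divides f in ℝ[x,y,z]. -/
open MvPolynomial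

/-- If `b11 = b21`, then the linear form `x + z` divides the Spohn cubic. -/
theorem X0_add_X2_dvd_spohnCubic (a11 a12 a21 a22 b11 b12 b21 b22 : ℝ)
    (h : b11 = b21) :
    (X 0 + X 2 : MvPolynomial (Fin 3) ℝ) ∣
      spohnCubic a11 a12 a21 a22 b11 b12 b21 b22 := by
  subst h
  refine ⟨C ((a11 - a22) * (b11 - b12)) * X 0 * X 1
    + C ((a11 - a21) * (b22 - b11)) * X 0 * X 2
    + C ((a12 - a22) * (b11 - b12)) * X 1 ^ 2
    + C ((a12 - a21) * (b22 - b11)) * X 1 * X 2, ?_⟩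
  simp only [spohnCubic, map_add]
  ring
end

section
/- Let f be the Spohn cubic of a 2×2 game with real payoff matrices A = (a_{ij}), B = (b_{ij}), with f ≠ 0. If a_{12}(b_{12}−b_{22})+a_{21}(b_{22}−b_{21})+a_{22}(b_{21}−b_{12}) = 0, a_{11}(b_{22}−b_{12})+a_{21}(b_{11}−b_{22})+a_{22}(b_{12}−b_{11}) = 0, and a_{11}(b_{22}−b_{21})+a_{12}(b_{11}−b_{22})+a_{22}(b_{21}−b_{11}) = 0, then f is reducible: there exist homogeneous polynomials g, h ∈ ℝ[x,y,z] of degrees 1 and 2 respectively with f = g·h. -/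
open MvPolynomial

/-- Under the stated linear relations on the payoff entries, the (nonzero) Spohn cubic
is reducible: it factors as a product of a homogeneous linear form and a homogeneous
quadric in ℝ[x, y, z]. -/
theorem spohnCubic_reducible_of_case9 (a11 a12 a21 a22 b11 b12 b21 b22 : ℝ)
    (hf : spohnCubic a11 a12 a21 a22 b11 b12 b21 b22 ≠ 0)
    (h1 : a12 * (b12 - b22) + a21 * (b22 - b21) + a22 * (b21 - b12) = 0)
    (h2 : a11 * (b22 - b12) + a21 * (b11 - b22) + a22 * (b12 - b11) = 0)
    (h3 : a11 * (b22 - b21) + a12 * (b11 - b22) + a22 * (b21 - b11) = 0) :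
    ∃ g h : MvPolynomial (Fin 3) ℝ, g.IsHomogeneous 1 ∧ h.IsHomogeneous 2 ∧
      spohnCubic a11 a12 a21 a22 b11 b12 b21 b22 = g * h := by
  -- coefficient relations forced by h1, h2
  have e1 : (a11 - a21) * (b22 - b11) = -((a11 - a22) * (b11 - b12)) := by
    linear_combination h2
  have e2 : (a12 - a21) * (b22 - b21) = -((a12 - a22) * (b21 - b12)) := by
    linear_combination -h1
  have e3 : (a12 - a21) * (b22 - b11) + (a11 - a22) * (b21 - b12)
      = -((a12 - a22) * (b11 - b12)) - (a11 - a21) * (b22 - b21) := by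
    linear_combination h2 - h1
  refine ⟨X 1 - X 2,
    C ((a11 - a22) * (b11 - b12)) * X 0 ^ 2
      + C ((a12 - a22) * (b11 - b12)) * X 0 * X 1
      - C ((a11 - a21) * (b22 - b21)) * X 0 * X 2
      + C ((a12 - a22) * (b21 - b12)) * X 1 * X 2, ?_, ?_, ?_⟩
  · exact (isHomogeneous_X _ _).sub (isHomogeneous_X _ _)
  · have hX : ∀ i : Fin 3, (X i : MvPolynomial (Fin 3) ℝ).IsHomogeneous 1 :=
      fun i => isHomogeneous_X _ _
    have hC : ∀ r : ℝ, (C r : MvPolynomial (Fin 3) ℝ).IsHomogeneous 0 :=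
      fun r => isHomogeneous_C _ _
    have t1 : (C ((a11 - a22) * (b11 - b12)) * X 0 ^ 2 :
        MvPolynomial (Fin 3) ℝ).IsHomogeneous 2 := by
      simpa only [zero_add, one_mul] using (hC _).mul ((hX 0).pow 2)
    have t2 : (C ((a12 - a22) * (b11 - b12)) * X 0 * X 1 :
        MvPolynomial (Fin 3) ℝ).IsHomogeneous 2 := by
      simpa only [zero_add] using ((hC _).mul (hX 0)).mul (hX 1)
    have t3 : (C ((a11 - a21) * (b22 - b21)) * X 0 * X 2 :
        MvPolynomial (Fin 3) ℝ).IsHomogeneous 2 := by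
      simpa only [zero_add] using ((hC _).mul (hX 0)).mul (hX 2)
    have t4 : (C ((a12 - a22) * (b21 - b12)) * X 1 * X 2 :
        MvPolynomial (Fin 3) ℝ).IsHomogeneous 2 := by
      simpa only [zero_add] using ((hC _).mul (hX 1)).mul (hX 2)
    exact ((t1.add t2).sub t3).add t4
  · rw [spohnCubic, e1, e2, e3]
    push_cast [C_neg, C_sub, C_add]
    ring
end

section
/- Let f be the Spohn cubic of a 2×2 game with real payoff matrices A = (a_{ij}), B = (b_{ij}), with f ≠ 0. If a_{11}(b_{12}−b_{21})+a_{12}(b_{21}−b_{22})+a_{21}(b_{22}−b_{12}) = 0, a_{12}(b_{11}−b_{21})+a_{21}(b_{12}−b_{11})+a_{22}(b_{21}−b_{12}) = 0, and a_{11}(b_{11}−b_{21})+a_{21}(b_{22}−b_{11})+a_{22}(b_{21}−b_{22}) = 0, then f is reducible: there exist homogeneous polynomials g, h ∈ ℝ[x,y,z] of degrees 1 and 2 respectively with f = g·h. -/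
open MvPolynomial

private lemma homC_X (c : ℝ) (i : Fin 3) :
    (C c * X i : MvPolynomial (Fin 3) ℝ).IsHomogeneous 1 := by
  simpa using (isHomogeneous_C (Fin 3) c).mul (isHomogeneous_X ℝ i)

private lemma homC_XX (c : ℝ) (i j : Fin 3) :
    (C c * X i * X j : MvPolynomial (Fin 3) ℝ).IsHomogeneous 2 := by
  simpa using ((isHomogeneous_C (Fin 3) c).mul (isHomogeneous_X ℝ i)).mul (isHomogeneous_X ℝ j)

private lemma homC_Xsq (c : ℝ) (i : Fin 3) :
    (C c * X i ^ 2 : MvPolynomial (Fin 3) ℝ).IsHomogeneous 2 := by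
  have : (C c * X i ^ 2 : MvPolynomial (Fin 3) ℝ) = C c * X i * X i := by ring
  rw [this]; exact homC_XX c i i

/-- Under the stated linear relations on the payoff entries, the (nonzero) Spohn cubic
is reducible: it factors as a product of a homogeneous linear form and a homogeneous
quadric in ℝ[x, y, z]. -/
theorem spohnCubic_reducible_of_case10 (a11 a12 a21 a22 b11 b12 b21 b22 : ℝ)
    (hf : spohnCubic a11 a12 a21 a22 b11 b12 b21 b22 ≠ 0)
    (h1 : a11 * (b12 - b21) + a12 * (b21 - b22) + a21 * (b22 - b12) = 0)
    (h2 : a12 * (b11 - b21) + a21 * (b12 - b11) + a22 * (b21 - b12) = 0)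
    (h3 : a11 * (b11 - b21) + a21 * (b22 - b11) + a22 * (b21 - b22) = 0) :
    ∃ g h : MvPolynomial (Fin 3) ℝ, g.IsHomogeneous 1 ∧ h.IsHomogeneous 2 ∧
      spohnCubic a11 a12 a21 a22 b11 b12 b21 b22 = g * h := by
  by_cases ht : b21 = b12
  · subst ht
    by_cases hs : a12 = a21
    · subst hs
      refine ⟨X 0,
        C ((a11 - a22) * (b11 - b21)) * X 0 * X 1
          + C ((a11 - a12) * (b22 - b11)) * X 0 * X 2
          + C ((a12 - a22) * (b11 - b21)) * X 1 ^ 2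
          + C ((a11 - a12) * (b22 - b21)) * X 2 ^ 2, isHomogeneous_X ℝ 0, ?_, ?_⟩
      · exact ((homC_XX _ 0 1).add (homC_XX _ 0 2)).add (homC_Xsq _ 1) |>.add (homC_Xsq _ 2)
      · simp only [spohnCubic, map_add, map_mul, map_sub]
        ring
    · exfalso
      apply hf
      have hs' : a12 - a21 ≠ 0 := sub_ne_zero.2 hs
      have e2 : (a12 - a21) * (b11 - b21) = 0 := by linear_combination h2
      have e1 : (a12 - a21) * (b21 - b22) = 0 := by linear_combination h1
      have hb1 : b11 = b21 := by
        rcases mul_eq_zero.1 e2 with h | h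
        · exact absurd h hs'
        · exact sub_eq_zero.1 h
      have hb2 : b21 = b22 := by
        rcases mul_eq_zero.1 e1 with h | h
        · exact absurd h hs'
        · exact sub_eq_zero.1 h
      rw [spohnCubic, hb1, hb2]
      simp only [map_add, map_mul, map_sub]
      ring
  · have ht' : b21 - b12 ≠ 0 := sub_ne_zero.2 ht
    by_cases hs : a12 = a21
    · exfalso
      apply hf
      subst hs
      have e1 : (a11 - a12) * (b21 - b12) = 0 := by linear_combination -h1
      have e2 : (a12 - a22) * (b21 - b12) = 0 := by linear_combination -h2
      have ha1 : a11 = a12 := by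
        rcases mul_eq_zero.1 e1 with h | h
        · exact sub_eq_zero.1 h
        · exact absurd h ht'
      have ha2 : a12 = a22 := by
        rcases mul_eq_zero.1 e2 with h | h
        · exact sub_eq_zero.1 h
        · exact absurd h ht'
      rw [spohnCubic, ha1, ha2]
      simp only [map_add, map_mul, map_sub]
      ring
    · -- generic case : t ≠ 0, s ≠ 0
      set u : ℝ := b11 - b12 with hu
      set v : ℝ := b22 - b11 with hv
      set w : ℝ := b22 - b21 with hw
      set t : ℝ := b21 - b12 with htt
      set s : ℝ := a12 - a21 with hss
      refine ⟨C u * X 1 + C w * X 2,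
        C (-(s * v) / t) * X 0 ^ 2 + C (s * u / t) * X 0 * X 1
          + C (-(s * w) / t) * X 0 * X 2 + C s * X 1 * X 2, ?_, ?_, ?_⟩
      · exact (homC_X u 1).add (homC_X w 2)
      · exact (((homC_Xsq _ 0).add (homC_XX _ 0 1)).add (homC_XX _ 0 2)).add (homC_XX s 1 2)
      · have hC : (C t : MvPolynomial (Fin 3) ℝ) ≠ 0 := fun hc => ht' (by
          simpa using congrArg (MvPolynomial.eval (fun _ => (0:ℝ))) hc)
        apply mul_left_cancel₀ hC
        have H1 : (C (a11 * (b12 - b21) + a12 * (b21 - b22) + a21 * (b22 - b12)) :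
            MvPolynomial (Fin 3) ℝ) = 0 := by rw [h1, map_zero]
        have H2 : (C (a12 * (b11 - b21) + a21 * (b12 - b11) + a22 * (b21 - b12)) :
            MvPolynomial (Fin 3) ℝ) = 0 := by rw [h2, map_zero]
        have key : (C t : MvPolynomial (Fin 3) ℝ) *
              spohnCubic a11 a12 a21 a22 b11 b12 b21 b22
            = C s * (C u * X 1 + C w * X 2) *
                (C (-v) * X 0 ^ 2 + C u * X 0 * X 1 + C (-w) * X 0 * X 2 + C t * X 1 * X 2)
              + C (a11 * (b12 - b21) + a12 * (b21 - b22) + a21 * (b22 - b12)) *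
                  (-(C u * X 0 ^ 2 * X 1) - C v * X 0 ^ 2 * X 2 - C w * X 0 * X 2 ^ 2
                    - C t * X 0 * X 1 * X 2)
              + C (a12 * (b11 - b21) + a21 * (b12 - b11) + a22 * (b21 - b12)) *
                  (-(C u * X 0 ^ 2 * X 1) - C u * X 0 * X 1 ^ 2 - C t * X 1 ^ 2 * X 2
                    - C t * X 0 * X 1 * X 2) := by
          rw [hu, hv, hw, htt, hss]
          simp only [spohnCubic, map_add, map_mul, map_sub, map_neg]
          ring
        rw [key, H1, H2]
        have hts : t * (s / t) = s := by field_simp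
        have expand : (C t : MvPolynomial (Fin 3) ℝ) *
              ((C u * X 1 + C w * X 2) *
                (C (-(s * v) / t) * X 0 ^ 2 + C (s * u / t) * X 0 * X 1
                  + C (-(s * w) / t) * X 0 * X 2 + C s * X 1 * X 2))
            = C s * (C u * X 1 + C w * X 2) *
                (C (-v) * X 0 ^ 2 + C u * X 0 * X 1 + C (-w) * X 0 * X 2 + C t * X 1 * X 2) := by
          have c1 : t * (-(s * v) / t) = s * (-v) := by field_simp <;> ring
          have c2 : t * (s * u / t) = s * u := by field_simp <;> ring
          have c3 : t * (-(s * w) / t) = s * (-w) := by field_simp <;> ring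
          calc (C t : MvPolynomial (Fin 3) ℝ) *
              ((C u * X 1 + C w * X 2) *
                (C (-(s * v) / t) * X 0 ^ 2 + C (s * u / t) * X 0 * X 1
                  + C (-(s * w) / t) * X 0 * X 2 + C s * X 1 * X 2))
              = (C u * X 1 + C w * X 2) *
                (C (t * (-(s * v) / t)) * X 0 ^ 2 + C (t * (s * u / t)) * X 0 * X 1
                  + C (t * (-(s * w) / t)) * X 0 * X 2 + C (t * s) * X 1 * X 2) := by
                simp only [map_mul]; ring
            _ = _ := by rw [c1, c2, c3]; simp only [map_mul]; try ring
        rw [expand]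
        ring
end

section
/- Let f be the Spohn cubic of a 2×2 game with real payoff matrices A = (a_{ij}), B = (b_{ij}), with f ≠ 0. If a_{12}(b_{22}−b_{21})+a_{21}(b_{12}−b_{22})+a_{22}(b_{21}−b_{12}) = 0, a_{11}(b_{22}−b_{21})+a_{21}(b_{11}−b_{22})+a_{22}(b_{21}−b_{11}) = 0, and a_{11}(b_{22}−b_{12})+a_{12}(b_{11}−b_{22})+a_{22}(b_{12}−b_{11}) = 0, then f is reducible: there exist homogeneous polynomials g, h ∈ ℝ[x,y,z] of degrees 1 and 2 respectively with f = g·h. -/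
open MvPolynomial

/-- Under the stated linear relations on the payoff entries, the (nonzero) Spohn cubic
is reducible: it factors as a product of a homogeneous linear form and a homogeneous
quadric in ℝ[x, y, z]. -/
theorem spohnCubic_reducible_of_case11 (a11 a12 a21 a22 b11 b12 b21 b22 : ℝ)
    (hf : spohnCubic a11 a12 a21 a22 b11 b12 b21 b22 ≠ 0)
    (h1 : a12 * (b22 - b21) + a21 * (b12 - b22) + a22 * (b21 - b12) = 0)
    (h2 : a11 * (b22 - b21) + a21 * (b11 - b22) + a22 * (b21 - b11) = 0)
    (h3 : a11 * (b22 - b12) + a12 * (b11 - b22) + a22 * (b12 - b11) = 0) :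
    ∃ g h : MvPolynomial (Fin 3) ℝ, g.IsHomogeneous 1 ∧ h.IsHomogeneous 2 ∧
      spohnCubic a11 a12 a21 a22 b11 b12 b21 b22 = g * h := by
  refine ⟨C (a11 - a22) * X 0 + C (a12 - a22) * X 1 + C (a21 - a22) * X 2,
    C (b11 - b12) * (X 0 * X 1) + C (b21 - b11) * (X 0 * X 2)
      + C (b21 - b12) * (X 1 * X 2), ?_, ?_, ?_⟩
  · exact (((isHomogeneous_X ℝ 0).C_mul _).add ((isHomogeneous_X ℝ 1).C_mul _)).add
      ((isHomogeneous_X ℝ 2).C_mul _)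
  · have hx : ∀ i j : Fin 3, (X i * X j : MvPolynomial (Fin 3) ℝ).IsHomogeneous 2 :=
      fun i j => (isHomogeneous_X ℝ i).mul (isHomogeneous_X ℝ j)
    exact (((hx 0 1).C_mul _).add ((hx 0 2).C_mul _)).add ((hx 1 2).C_mul _)
  · have H1 : (C (a12 * (b22 - b21) + a21 * (b12 - b22) + a22 * (b21 - b12)) :
        MvPolynomial (Fin 3) ℝ) = 0 := by rw [h1, C_0]
    have H2 : (C (a11 * (b22 - b21) + a21 * (b11 - b22) + a22 * (b21 - b11)) :
        MvPolynomial (Fin 3) ℝ) = 0 := by rw [h2, C_0]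
    simp only [C_add, C_mul, C_sub] at H1 H2 ⊢
    unfold spohnCubic
    simp only [C_add, C_mul, C_sub]
    linear_combination (X 0 ^ 2 * X 2 + X 0 * X 2 ^ 2 : MvPolynomial (Fin 3) ℝ) * H2
      + (X 1 * X 2 ^ 2 + X 0 * X 1 * X 2 : MvPolynomial (Fin 3) ℝ) * H1
end

section
/- Let f be the Spohn cubic of a 2×2 game with real payoff matrices A = (a_{ij}), B = (b_{ij}), with f ≠ 0. If a_{11}(b_{12}−b_{21})+a_{12}(b_{22}−b_{12})+a_{21}(b_{21}−b_{22}) = 0, a_{12}(b_{11}−b_{12})+a_{21}(b_{21}−b_{11})+a_{22}(b_{12}−b_{21}) = 0, and a_{11}(b_{11}−b_{21})+a_{12}(b_{22}−b_{12})+a_{21}(b_{21}−b_{11})+a_{22}(b_{12}−b_{22}) = 0, then f is reducible: there exist homogeneous polynomials g, h ∈ ℝ[x,y,z] of degrees 1 and 2 respectively with f = g·h. -/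
open MvPolynomial

/-- If the vector of `b`-differences is proportional (with ratio `l`) to the vector of
`a`-differences, the Spohn cubic factors explicitly. -/
lemma spohnCubic_eq_mul (a11 a12 a21 a22 b11 b12 b21 b22 l : ℝ)
    (e1 : b21 - b22 = l * (a11 - a12))
    (e2 : b12 - b21 = l * (a12 - a21))
    (e3 : b11 - b12 = l * (a21 - a22)) :
    spohnCubic a11 a12 a21 a22 b11 b12 b21 b22 =
      (C (a11 - a22) * X 0 + C (a12 - a22) * X 1 + C (a11 - a12) * X 2) *
      (C (l * (a21 - a22)) * (X 0 * X 1) + C (-(l * (a11 - a21))) * (X 0 * X 2)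
        + C (l * (a21 - a12)) * (X 1 * X 2)) := by
  have hb21 : b21 = b22 + l * (a11 - a12) := by linarith
  subst hb21
  have hb12 : b12 = b22 + l * (a11 - a12) + l * (a12 - a21) := by linarith
  subst hb12
  have hb11 : b11 = b22 + l * (a11 - a12) + l * (a12 - a21) + l * (a21 - a22) := by linarith
  subst hb11
  rw [spohnCubic]
  simp only [map_add, map_sub, map_mul, map_neg]
  ring

/-- Packaged existence statement given the proportionality data. -/
lemma spohnCubic_exists_factor (a11 a12 a21 a22 b11 b12 b21 b22 l : ℝ)
    (e1 : b21 - b22 = l * (a11 - a12))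
    (e2 : b12 - b21 = l * (a12 - a21))
    (e3 : b11 - b12 = l * (a21 - a22)) :
    ∃ g h : MvPolynomial (Fin 3) ℝ, g.IsHomogeneous 1 ∧ h.IsHomogeneous 2 ∧
      spohnCubic a11 a12 a21 a22 b11 b12 b21 b22 = g * h := by
  refine ⟨_, _, ?_, ?_, spohnCubic_eq_mul a11 a12 a21 a22 b11 b12 b21 b22 l e1 e2 e3⟩
  · exact ((isHomogeneous_C_mul_X _ _).add (isHomogeneous_C_mul_X _ _)).add
      (isHomogeneous_C_mul_X _ _)
  · have hx : ∀ (r : ℝ) (i j : Fin 3),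
        (C r * (X i * X j) : MvPolynomial (Fin 3) ℝ).IsHomogeneous 2 := by
      intro r i j
      simpa using (((isHomogeneous_X ℝ i).mul (isHomogeneous_X ℝ j)).C_mul r)
    exact ((hx _ _ _).add (hx _ _ _)).add (hx _ _ _)

/-- Under the stated linear relations on the payoff entries, the (nonzero) Spohn cubic
is reducible: it factors as a product of a homogeneous linear form and a homogeneous
quadric in ℝ[x, y, z]. -/
theorem spohnCubic_reducible_of_case12 (a11 a12 a21 a22 b11 b12 b21 b22 : ℝ)
    (hf : spohnCubic a11 a12 a21 a22 b11 b12 b21 b22 ≠ 0)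
    (h1 : a11 * (b12 - b21) + a12 * (b22 - b12) + a21 * (b21 - b22) = 0)
    (h2 : a12 * (b11 - b12) + a21 * (b21 - b11) + a22 * (b12 - b21) = 0)
    (h3 : a11 * (b11 - b21) + a12 * (b22 - b12) + a21 * (b21 - b11) + a22 * (b12 - b22) = 0) :
    ∃ g h : MvPolynomial (Fin 3) ℝ, g.IsHomogeneous 1 ∧ h.IsHomogeneous 2 ∧
      spohnCubic a11 a12 a21 a22 b11 b12 b21 b22 = g * h := by
  have m1 : (a11 - a12) * (b12 - b21) = (a12 - a21) * (b21 - b22) := by linear_combination h1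
  have m2 : (a12 - a21) * (b11 - b12) = (a21 - a22) * (b12 - b21) := by linear_combination h2
  have m3 : (a11 - a12) * (b11 - b12) = (a21 - a22) * (b21 - b22) := by
    linear_combination h3 - h1 - h2
  by_cases k1 : a11 - a12 = 0
  · by_cases k2 : a12 - a21 = 0
    · by_cases k3 : a21 - a22 = 0
      · exfalso
        apply hf
        have p1 : a11 = a12 := by linarith
        have p2 : a12 = a21 := by linarith
        have p3 : a21 = a22 := by linarith
        subst p1; subst p2; subst p3
        simp [spohnCubic]
      · -- a11 = a12 = a21, a21 - a22 ≠ 0 ; take l = (b11-b12)/(a21-a22)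
        refine spohnCubic_exists_factor a11 a12 a21 a22 b11 b12 b21 b22
          ((b11 - b12) / (a21 - a22)) ?_ ?_ ?_
        · have h0 : (a21 - a22) * (b21 - b22) = 0 := by
            linear_combination (b11 - b12) * k1 - m3
          have hb : b21 - b22 = 0 := (mul_eq_zero.mp h0).resolve_left k3
          rw [k1, mul_zero]; exact hb
        · have h0 : (a21 - a22) * (b12 - b21) = 0 := by
            linear_combination (b11 - b12) * k2 - m2
          have hb : b12 - b21 = 0 := (mul_eq_zero.mp h0).resolve_left k3
          rw [k2, mul_zero]; exact hb
        · field_simp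
    · -- a12 - a21 ≠ 0 ; take l = (b12-b21)/(a12-a21)
      refine spohnCubic_exists_factor a11 a12 a21 a22 b11 b12 b21 b22
        ((b12 - b21) / (a12 - a21)) ?_ ?_ ?_
      · field_simp
        linear_combination -m1
      · field_simp
      · field_simp
        linear_combination m2
  · -- a11 - a12 ≠ 0 ; take l = (b21-b22)/(a11-a12)
    refine spohnCubic_exists_factor a11 a12 a21 a22 b11 b12 b21 b22
      ((b21 - b22) / (a11 - a12)) ?_ ?_ ?_
    · field_simp
    · field_simp
      linear_combination m1
    · field_simp
      linear_combination m3
end
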